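/- For every ξ ∈ ℝ² and every x ∈ ℝ² with x ≠ ξ, the function G(x) = ‖x − ξ‖² (log‖x − ξ‖ − 1)/(8π) is twice differentiable at x and ΔG(x) = (1/(2π)) log‖x − ξ‖. That is, G is a generalized Green's function for the Laplacian on ℝ² whose Laplacian equals the singular part t_s(x, ξ) = (1/(2π)) log‖x − ξ‖ away from the singularity. -/

import Mathlib

open MeasureTheory

/-- The Laplacian of `u : ℝⁿ → ℝ` at `x`: the sum of the second partial derivatives
of `u` along the standard basis directions. -/
noncomputable def laplacian {n : ℕ} (u : EuclideanSpace ℝ (Fin n) → ℝ)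
    (x : EuclideanSpace ℝ (Fin n)) : ℝ :=
  ∑ i : Fin n,
    fderiv ℝ (fun y => fderiv ℝ u y (EuclideanSpace.single i 1)) x (EuclideanSpace.single i 1)

/-!
Write `G(y) = φ(‖y - ξ‖²)` with `φ(t) = t (log t - 2) / (16π)`. For any profile `φ` the chain
rule gives the Hessian `4 φ''(r²) (x - ξ)(x - ξ)ᵀ + 2 φ'(r²) I` at `x`, where `r = ‖x - ξ‖`,
so in `ℝⁿ` the Laplacian is `4 r² φ''(r²) + 2n φ'(r²)`. Here `φ'(t) = (log t - 1) / (16π)` and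
`φ''(t) = 1 / (16π t)`, so for `n = 2` this is `log (r²) / (4π) = log r / (2π)`; smoothness
follows since `φ` is smooth on `t ≠ 0`.
-/

open Filter Topology
open scoped RealInnerProductSpace

section RadialSquare

variable {E : Type*} [NormedAddCommGroup E] [InnerProductSpace ℝ E] {f f' : ℝ → ℝ} {d : ℝ}
  {ξ x : E}

theorem HasDerivAt.hasFDerivAt_comp_norm_sub_sq (hf : HasDerivAt f d (‖x - ξ‖ ^ 2)) :
    HasFDerivAt (fun y => f (‖y - ξ‖ ^ 2)) ((2 * d) • innerSL ℝ (x - ξ)) x := by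
  refine (hf.comp_hasFDerivAt x ((hasFDerivAt_id x).sub_const ξ).norm_sq).congr_fderiv ?_
  ext v
  simp only [id, smul_apply, ContinuousLinearMap.comp_apply,
    ContinuousLinearMap.id_apply, smul_eq_mul, nsmul_eq_mul]
  ring

theorem fderiv_fderiv_comp_norm_sub_sq_apply
    (hf : ∀ᶠ t in 𝓝 (‖x - ξ‖ ^ 2), HasDerivAt f (f' t) t) (hf' : HasDerivAt f' d (‖x - ξ‖ ^ 2))
    (v : E) :
    fderiv ℝ (fun y => fderiv ℝ (fun y => f (‖y - ξ‖ ^ 2)) y v) x v =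
      4 * d * ⟪x - ξ, v⟫ ^ 2 + 2 * f' (‖x - ξ‖ ^ 2) * ‖v‖ ^ 2 := by
  have hq : Tendsto (fun y : E => ‖y - ξ‖ ^ 2) (𝓝 x) (𝓝 (‖x - ξ‖ ^ 2)) :=
    ((continuous_id.sub continuous_const).norm.pow 2).tendsto x
  have hfirst : (fun y => fderiv ℝ (fun y => f (‖y - ξ‖ ^ 2)) y v) =ᶠ[𝓝 x]
      fun y => 2 * f' (‖y - ξ‖ ^ 2) * ⟪y - ξ, v⟫ := by
    filter_upwards [hq.eventually hf] with y hy
    simp [hy.hasFDerivAt_comp_norm_sub_sq.fderiv, inner_sub_left]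
  have hsecond := (hf'.hasFDerivAt_comp_norm_sub_sq.const_mul 2).fun_mul
    ((hasFDerivAt_sub_const ξ).inner ℝ (hasFDerivAt_const v x))
  rw [hfirst.fderiv_eq, hsecond.fderiv]
  simp only [add_apply, smul_apply, ContinuousLinearMap.comp_apply, ContinuousLinearMap.prod_apply,
    ContinuousLinearMap.id_apply, zero_apply, fderivInnerCLM_apply, inner_zero_right, zero_add,
    real_inner_self_eq_norm_sq, smul_eq_mul, innerSL_apply_apply]
  ring

end RadialSquare

theorem laplacian_comp_norm_sub_sq {n : ℕ} {f f' : ℝ → ℝ} {d : ℝ}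
    {ξ x : EuclideanSpace ℝ (Fin n)}
    (hf : ∀ᶠ t in 𝓝 (‖x - ξ‖ ^ 2), HasDerivAt f (f' t) t) (hf' : HasDerivAt f' d (‖x - ξ‖ ^ 2)) :
    laplacian (fun y => f (‖y - ξ‖ ^ 2)) x = 4 * d * ‖x - ξ‖ ^ 2 + 2 * n * f' (‖x - ξ‖ ^ 2) := by
  have hsum : ∑ i : Fin n, ⟪x - ξ, EuclideanSpace.single i 1⟫ ^ 2 = ‖x - ξ‖ ^ 2 := by
    simpa using (EuclideanSpace.basisFun (Fin n) ℝ).sum_sq_inner_left (x - ξ)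
  simp only [laplacian, fderiv_fderiv_comp_norm_sub_sq_apply hf hf', Finset.sum_add_distrib,
    ← Finset.mul_sum, hsum, PiLp.norm_single, norm_one, one_pow, mul_one, Finset.sum_const,
    Finset.card_univ, Fintype.card_fin, nsmul_eq_mul]
  ring

noncomputable def greenRadialProfile (t : ℝ) : ℝ :=
  t * (Real.log t - 2) / (16 * Real.pi)

theorem hasDerivAt_greenRadialProfile {t : ℝ} (ht : t ≠ 0) :
    HasDerivAt greenRadialProfile ((Real.log t - 1) / (16 * Real.pi)) t := by
  refine (((hasDerivAt_id' t).mul ((Real.hasDerivAt_log ht).sub_const 2)).div_const _).congr_deriv ?_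
  field_simp
  ring

theorem contDiffAt_greenRadialProfile {n : WithTop ℕ∞} {t : ℝ} (ht : t ≠ 0) :
    ContDiffAt ℝ n greenRadialProfile t :=
  (contDiffAt_id.mul ((Real.contDiffAt_log.mpr ht).sub contDiffAt_const)).div_const _

theorem greenRadialProfile_norm_sq {E : Type*} [SeminormedAddCommGroup E] (v : E) :
    greenRadialProfile (‖v‖ ^ 2) = ‖v‖ ^ 2 * (Real.log ‖v‖ - 1) / (8 * Real.pi) := by
  rw [greenRadialProfile, Real.log_pow]
  push_cast
  ring

/-- The 2D generalized Green's function `G(x) = ‖x − ξ‖²(log‖x − ξ‖ − 1)/(8π)` is twice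
differentiable away from the singularity, where its Laplacian equals the singular part
`t_s(x, ξ) = (1/(2π)) log‖x − ξ‖`. -/
theorem generalized_green_2d (ξ x : EuclideanSpace ℝ (Fin 2)) (hx : x ≠ ξ) :
    ContDiffAt ℝ 2 (fun y => ‖y - ξ‖ ^ 2 * (Real.log ‖y - ξ‖ - 1) / (8 * Real.pi)) x ∧
      laplacian (fun y => ‖y - ξ‖ ^ 2 * (Real.log ‖y - ξ‖ - 1) / (8 * Real.pi)) x =
        (1 / (2 * Real.pi)) * Real.log ‖x - ξ‖ := by
  simp_rw [← greenRadialProfile_norm_sq]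
  have hr₀ : ‖x - ξ‖ ≠ 0 := norm_ne_zero_iff.mpr (sub_ne_zero.mpr hx)
  have hr : ‖x - ξ‖ ^ 2 ≠ 0 := pow_ne_zero 2 hr₀
  refine ⟨(contDiffAt_greenRadialProfile hr).comp x
    ((contDiff_norm_sq ℝ).comp (contDiff_id.sub contDiff_const)).contDiffAt, ?_⟩
  have hprofile : ∀ᶠ t in 𝓝 (‖x - ξ‖ ^ 2),
      HasDerivAt greenRadialProfile ((Real.log t - 1) / (16 * Real.pi)) t :=
    eventually_of_mem (isOpen_ne.mem_nhds hr) fun _ => hasDerivAt_greenRadialProfile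
  have hslope : HasDerivAt (fun t => (Real.log t - 1) / (16 * Real.pi))
      ((‖x - ξ‖ ^ 2)⁻¹ / (16 * Real.pi)) (‖x - ξ‖ ^ 2) :=
    ((Real.hasDerivAt_log hr).sub_const 1).div_const _
  rw [laplacian_comp_norm_sub_sq hprofile hslope, Real.log_pow]
  field_simp
  ring
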